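/- arXiv:1707.07492 — 3 statements merged into one kernel-verified Lean document; each statement's English description precedes it below -/
import Mathlib

section
/- (Maximum principle for the Bessel Poisson extension.) Let λ > 0, let μ be a Borel measure on ℝ²₊₊, let g : ℝ²₊₊ → [0,∞] be Borel measurable, let I ⊂ ℝ₊ be a bounded interval, let x ∈ I, and let z ∈ ℝ₊ satisfy |I| ≤ |z − x| ≤ 3|I|. Then P*_μ(g · 1_{ℝ²₊₊ ∖ 3Î})(x) ≤ 19^{λ+1} · P*_μ(g)(z). In particular, if P*_μ(g)(z) ≤ κ then P*_μ(g · 1_{ℝ²₊₊ ∖ 3Î})(x) ≤ 19^{λ+1} κ. -/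
open MeasureTheory Set ENNReal

/-- The Bessel Poisson kernel given by Weinstein's formula. -/
noncomputable def PK (lam t x y : ℝ) : ℝ :=
  (2 * lam * t / Real.pi) *
    ∫ θ in Set.Ioo (0 : ℝ) Real.pi,
      Real.sin θ ^ (2 * lam - 1) *
        (x ^ 2 + y ^ 2 + t ^ 2 - 2 * x * y * Real.cos θ) ^ (-(lam + 1))

/-- The Poisson extension `P_σ f (x, t)` of a nonnegative function on `ℝ₊`. -/
noncomputable def Pfwd (lam : ℝ) (σ : Measure ℝ) (f : ℝ → ℝ≥0∞) (x t : ℝ) : ℝ≥0∞ :=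
  ∫⁻ y in Set.Ioi (0 : ℝ), ENNReal.ofReal (PK lam t x y) * f y ∂σ

/-- The adjoint operator `P*_μ g (y)` of a nonnegative function on `ℝ²₊₊`. -/
noncomputable def Padj (lam : ℝ) (μ : Measure (ℝ × ℝ)) (g : ℝ × ℝ → ℝ≥0∞) (y : ℝ) : ℝ≥0∞ :=
  ∫⁻ p in Set.Ioi (0 : ℝ) ×ˢ Set.Ioi (0 : ℝ), ENNReal.ofReal (PK lam p.2 p.1 y) * g p ∂μ

/-- The triple `3I` of the interval `I = (a, b)`, intersected with `ℝ₊`. -/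
def tri (a b : ℝ) : Set ℝ :=
  Set.Ioo ((a + b) / 2 - 3 * (b - a) / 2) ((a + b) / 2 + 3 * (b - a) / 2) ∩ Set.Ioi 0

/-- The Carleson box `Î = I × [0, |I|]` of the interval `I = (a, b)`. -/
def boxI (a b : ℝ) : Set (ℝ × ℝ) := Set.Ioo a b ×ˢ Set.Icc 0 (b - a)

/-- The enlarged box `3Î = 3I × [0, 3|I|]` of the interval `I = (a, b)`. -/
def boxI3 (a b : ℝ) : Set (ℝ × ℝ) := tri a b ×ˢ Set.Icc 0 (3 * (b - a))

/-- The two-weight norm inequality for the Bessel Poisson operator with constant `N`,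
for nonnegative `f ∈ L²(ℝ₊; σ)`. -/
def NormIneq (lam : ℝ) (σ : Measure ℝ) (μ : Measure (ℝ × ℝ)) (N : ℝ≥0∞) : Prop :=
  ∀ f : ℝ → ℝ≥0∞, Measurable f → (∫⁻ y in Set.Ioi (0 : ℝ), f y ^ 2 ∂σ) < ∞ →
    (∫⁻ p in Set.Ioi (0 : ℝ) ×ˢ Set.Ioi (0 : ℝ), Pfwd lam σ f p.1 p.2 ^ 2 ∂μ)
      ≤ N ^ 2 * ∫⁻ y in Set.Ioi (0 : ℝ), f y ^ 2 ∂σ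

/-- The dual two-weight norm inequality with constant `N`, for nonnegative
`g ∈ L²(ℝ²₊₊; μ)`. -/
def DualNormIneq (lam : ℝ) (σ : Measure ℝ) (μ : Measure (ℝ × ℝ)) (N : ℝ≥0∞) : Prop :=
  ∀ g : ℝ × ℝ → ℝ≥0∞, Measurable g →
    (∫⁻ p in Set.Ioi (0 : ℝ) ×ˢ Set.Ioi (0 : ℝ), g p ^ 2 ∂μ) < ∞ →
    (∫⁻ y in Set.Ioi (0 : ℝ), Padj lam μ g y ^ 2 ∂σ)
      ≤ N ^ 2 * ∫⁻ p in Set.Ioi (0 : ℝ) ×ˢ Set.Ioi (0 : ℝ), g p ^ 2 ∂μ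

/-- The forward testing condition with constant `F`:
`∫_{3Î} (P_σ 1_I)² dμ ≤ F² σ(I)` for every bounded interval `I ⊂ ℝ₊`. -/
def FwdTesting (lam : ℝ) (σ : Measure ℝ) (μ : Measure (ℝ × ℝ)) (F : ℝ≥0∞) : Prop :=
  ∀ a b : ℝ, 0 ≤ a → a < b →
    (∫⁻ p in boxI3 a b, Pfwd lam σ ((Set.Ioo a b).indicator 1) p.1 p.2 ^ 2 ∂μ)
      ≤ F ^ 2 * σ (Set.Ioo a b)

/-- The backward testing condition with constant `B`:
`∫_{3I} (P*_μ (t 1_Î))² dσ ≤ B² ∫_Î t² dμ` for every bounded interval `I ⊂ ℝ₊`. -/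
def BwdTesting (lam : ℝ) (σ : Measure ℝ) (μ : Measure (ℝ × ℝ)) (B : ℝ≥0∞) : Prop :=
  ∀ a b : ℝ, 0 ≤ a → a < b →
    (∫⁻ y in tri a b,
        Padj lam μ ((boxI a b).indicator fun p => ENNReal.ofReal p.2) y ^ 2 ∂σ)
      ≤ B ^ 2 * ∫⁻ p in boxI a b, ENNReal.ofReal p.2 ^ 2 ∂μ


open Real

/-! For `(u, t)` outside `3Î` the point `(x, 0)` is at distance at least `|I| ≥ |z - x| / 3` from
`(u, t)`, uniformly in the angle: `u² + x² + t² - 2ux cos θ ≥ |I|²`. Hence the quadratic in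
Weinstein's formula at `z` is at most `16` times the one at `x`, for every `θ`. Raising to the
power `-(λ + 1)` and integrating against `sin^{2λ-1} θ` compares the kernels,
`P_t(u, x) ≤ 16^{λ+1} P_t(u, z) ≤ 19^{λ+1} P_t(u, z)`, and integrating against `g dμ` gives
the maximum principle. -/

lemma intervalIntegrable_sin_rpow_zero_pi_div_two {p : ℝ} (hp : -1 < p) :
    IntervalIntegrable (fun θ => sin θ ^ p) volume 0 (π / 2) := by
  refine ((intervalIntegrable_const (c := (1 : ℝ))).add
    ((intervalIntegral.intervalIntegrable_rpow' hp).const_mul ((2 / π) ^ p))).mono_fun'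
    (by fun_prop : Measurable fun θ => sin θ ^ p).aestronglyMeasurable ?_
  rw [uIoc_of_le (by positivity)]
  filter_upwards [ae_restrict_mem measurableSet_Ioc] with θ ⟨hθ₀, hθ⟩
  have hsin : 0 ≤ sin θ := sin_nonneg_of_nonneg_of_le_pi hθ₀.le (by linarith [pi_pos])
  have hlin : 0 ≤ (2 / π) ^ p * θ ^ p := by positivity
  rw [norm_of_nonneg (rpow_nonneg hsin p)]
  rcases le_or_gt 0 p with hp₀ | hp₀
  · linarith [rpow_le_one hsin (sin_le_one θ) hp₀]
  · -- Jordan's inequality `2θ/π ≤ sin θ` controls the singularity at `0`.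
    have := rpow_le_rpow_of_nonpos (by positivity) (mul_le_sin hθ₀.le hθ) hp₀.le
    rw [mul_rpow (by positivity) hθ₀.le] at this
    linarith

lemma intervalIntegrable_sin_rpow {p : ℝ} (hp : -1 < p) :
    IntervalIntegrable (fun θ => sin θ ^ p) volume 0 π := by
  have hleft := intervalIntegrable_sin_rpow_zero_pi_div_two hp
  have hright := hleft.comp_sub_left π
  simp only [sin_pi_sub, sub_zero, show π - π / 2 = π / 2 by ring] at hright
  exact hleft.trans hright.symm

lemma sq_le_weinstein_quadratic (x y t c : ℝ) (hc : c ∈ Icc (-1 : ℝ) 1) :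
    t ^ 2 ≤ x ^ 2 + y ^ 2 + t ^ 2 - 2 * x * y * c := by
  nlinarith [sq_nonneg (x - y * c), mul_nonneg (sq_nonneg y)
    (mul_nonneg (sub_nonneg.2 hc.2) (neg_le_iff_add_nonneg.1 hc.1))]

lemma integrableOn_weinstein_integrand {lam t x y : ℝ} (hlam : 0 < lam) (ht : t ≠ 0) :
    IntegrableOn (fun θ => sin θ ^ (2 * lam - 1) *
      (x ^ 2 + y ^ 2 + t ^ 2 - 2 * x * y * cos θ) ^ (-(lam + 1))) (Ioo 0 π) := by
  have hsin := (intervalIntegrable_iff_integrableOn_Ioo_of_le pi_pos.le).1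
    (intervalIntegrable_sin_rpow (p := 2 * lam - 1) (by linarith))
  refine (hsin.const_mul ((t ^ 2) ^ (-(lam + 1)))).mono'
    (by fun_prop : Measurable _).aestronglyMeasurable ?_
  filter_upwards [ae_restrict_mem measurableSet_Ioo] with θ ⟨hθ₀, hθ⟩
  have hD := sq_le_weinstein_quadratic x y t (cos θ) ⟨neg_one_le_cos θ, cos_le_one θ⟩
  have ht₂ : 0 < t ^ 2 := by positivity
  have hs : 0 ≤ sin θ ^ (2 * lam - 1) :=
    rpow_nonneg (sin_nonneg_of_nonneg_of_le_pi hθ₀.le hθ.le) _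
  rw [norm_of_nonneg (mul_nonneg hs (rpow_nonneg (ht₂.le.trans hD) _)),
    mul_comm ((t ^ 2) ^ (-(lam + 1)))]
  exact mul_le_mul_of_nonneg_left (rpow_le_rpow_of_nonpos ht₂ hD (by linarith)) hs

lemma rpow_neg_le_rpow_mul_rpow_neg {A B K s : ℝ} (hB : 0 < B) (hK : 0 < K)
    (hBA : B ≤ K * A) (hs : 0 ≤ s) : A ^ (-s) ≤ K ^ s * B ^ (-s) := by
  calc A ^ (-s) ≤ (B / K) ^ (-s) :=
        rpow_le_rpow_of_nonpos (by positivity) (by rwa [div_le_iff₀' hK]) (neg_nonpos.2 hs)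
    _ = K ^ s * B ^ (-s) := by
        rw [div_rpow hB.le hK.le, rpow_neg hK.le, div_inv_eq_mul, mul_comm]

lemma PK_le_rpow_mul_PK {lam t u x z K : ℝ} (hlam : 0 < lam) (ht : 0 < t) (hK : 0 < K)
    (h : ∀ c ∈ Icc (-1 : ℝ) 1,
      u ^ 2 + z ^ 2 + t ^ 2 - 2 * u * z * c ≤ K * (u ^ 2 + x ^ 2 + t ^ 2 - 2 * u * x * c)) :
    PK lam t u x ≤ K ^ (lam + 1) * PK lam t u z := by
  have hpoint : ∀ θ ∈ Ioo 0 π,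
      sin θ ^ (2 * lam - 1) * (u ^ 2 + x ^ 2 + t ^ 2 - 2 * u * x * cos θ) ^ (-(lam + 1)) ≤
        K ^ (lam + 1) * (sin θ ^ (2 * lam - 1) *
          (u ^ 2 + z ^ 2 + t ^ 2 - 2 * u * z * cos θ) ^ (-(lam + 1))) := by
    rintro θ ⟨hθ₀, hθ⟩
    have hc : cos θ ∈ Icc (-1 : ℝ) 1 := ⟨neg_one_le_cos θ, cos_le_one θ⟩
    have hDz := (pow_pos ht 2).trans_le (sq_le_weinstein_quadratic u z t _ hc)
    rw [mul_left_comm]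
    exact mul_le_mul_of_nonneg_left
      (rpow_neg_le_rpow_mul_rpow_neg hDz hK (h _ hc) (by linarith))
      (rpow_nonneg (sin_nonneg_of_nonneg_of_le_pi hθ₀.le hθ.le) _)
  have hint := setIntegral_mono_on (integrableOn_weinstein_integrand hlam ht.ne')
    ((integrableOn_weinstein_integrand hlam ht.ne').const_mul _) measurableSet_Ioo hpoint
  rw [integral_const_mul] at hint
  unfold PK
  rw [mul_left_comm]
  exact mul_le_mul_of_nonneg_left hint (by positivity)

lemma sq_le_sq_sub_add_sq_of_notMem_boxI3 {a b u t x : ℝ} (hx : x ∈ Ioo a b) (hu : 0 < u)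
    (ht : 0 < t) (hout : (u, t) ∉ boxI3 a b) : (b - a) ^ 2 ≤ (u - x) ^ 2 + t ^ 2 := by
  simp only [boxI3, tri, mem_prod, mem_inter_iff, mem_Ioo, mem_Ioi, mem_Icc, hu, ht.le,
    and_true, true_and, not_and_or, not_lt, not_le] at hout
  obtain ⟨hxa, hxb⟩ := hx
  rcases hout with (hleft | hright) | hbig <;> nlinarith

lemma weinstein_quadratic_le_sixteen_mul {u x z t c : ℝ} (hc : c ∈ Icc (-1 : ℝ) 1)
    (h : (z - x) ^ 2 ≤ 9 * (u ^ 2 + x ^ 2 + t ^ 2 - 2 * u * x * c)) :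
    u ^ 2 + z ^ 2 + t ^ 2 - 2 * u * z * c ≤ 16 * (u ^ 2 + x ^ 2 + t ^ 2 - 2 * u * x * c) := by
  -- The quadratic at `y` is `(y - uc)² + u²(1 - c²) + t²`,
  -- and `(z - uc)² ≤ 4/3 (z - x)² + 4 (x - uc)²`.
  nlinarith [sq_nonneg (z - x - 3 * (x - u * c)), sq_nonneg t, mul_nonneg (sq_nonneg u)
    (mul_nonneg (sub_nonneg.2 hc.2) (neg_le_iff_add_nonneg.1 hc.1))]

lemma PK_le_of_notMem_boxI3 {lam a b t u x z : ℝ} (hlam : 0 < lam) (ha : 0 ≤ a)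
    (hx : x ∈ Ioo a b) (hzx : |z - x| ≤ 3 * (b - a)) (hu : 0 < u) (ht : 0 < t)
    (hout : (u, t) ∉ boxI3 a b) :
    PK lam t u x ≤ 19 ^ (lam + 1) * PK lam t u z := by
  refine PK_le_rpow_mul_PK hlam ht (by norm_num) fun c hc => ?_
  have hx₀ : 0 < x := ha.trans_lt hx.1
  have hsep := sq_le_sq_sub_add_sq_of_notMem_boxI3 hx hu ht hout
  have hDx : (b - a) ^ 2 ≤ u ^ 2 + x ^ 2 + t ^ 2 - 2 * u * x * c := by
    nlinarith [mul_nonneg (mul_nonneg hu.le hx₀.le) (sub_nonneg.2 hc.2)]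
  have hzx₂ : (z - x) ^ 2 ≤ 9 * (b - a) ^ 2 := by
    nlinarith [sq_abs (z - x), abs_nonneg (z - x)]
  have hDz := weinstein_quadratic_le_sixteen_mul (u := u) (x := x) (z := z) (t := t) hc
    (by linarith)
  linarith [sq_nonneg (b - a)]

lemma Padj_indicator_le_ofReal_mul_Padj {lam C x z : ℝ} {μ : Measure (ℝ × ℝ)}
    {g : ℝ × ℝ → ℝ≥0∞} {s : Set (ℝ × ℝ)} (hC : 0 ≤ C)
    (h : ∀ p ∈ s, PK lam p.2 p.1 x ≤ C * PK lam p.2 p.1 z) :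
    Padj lam μ (s.indicator g) x ≤ ENNReal.ofReal C * Padj lam μ g z := by
  unfold Padj
  rw [← lintegral_const_mul' _ _ ofReal_ne_top]
  refine lintegral_mono fun p => ?_
  by_cases hp : p ∈ s
  · rw [indicator_of_mem hp, ← mul_assoc, ← ENNReal.ofReal_mul hC]
    gcongr
    exact h p hp
  · simp [indicator_of_notMem hp]

theorem bessel_poisson_maximum_principle_general (lam : ℝ) (hlam : 0 < lam)
    (μ : Measure (ℝ × ℝ)) (g : ℝ × ℝ → ℝ≥0∞)
    (a b : ℝ) (ha : 0 ≤ a)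
    (x z : ℝ) (hx : x ∈ Set.Ioo a b)
    (hzx₂ : |z - x| ≤ 3 * (b - a)) :
    Padj lam μ (((Set.Ioi (0 : ℝ) ×ˢ Set.Ioi (0 : ℝ)) \ boxI3 a b).indicator g) x
        ≤ ENNReal.ofReal ((19 : ℝ) ^ (lam + 1)) * Padj lam μ g z ∧
      ∀ κ : ℝ≥0∞, Padj lam μ g z ≤ κ →
        Padj lam μ (((Set.Ioi (0 : ℝ) ×ˢ Set.Ioi (0 : ℝ)) \ boxI3 a b).indicator g) x
          ≤ ENNReal.ofReal ((19 : ℝ) ^ (lam + 1)) * κ := by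
  have key : Padj lam μ (((Ioi 0 ×ˢ Ioi 0) \ boxI3 a b).indicator g) x
      ≤ ENNReal.ofReal (19 ^ (lam + 1)) * Padj lam μ g z :=
    Padj_indicator_le_ofReal_mul_Padj (by positivity) fun _ ⟨⟨hu, ht⟩, hout⟩ =>
      PK_le_of_notMem_boxI3 hlam ha hx hzx₂ hu ht hout
  exact ⟨key, fun κ hκ => key.trans (by gcongr)⟩

/-- Maximum principle for the Bessel Poisson extension: if `x ∈ I` and
`|I| ≤ |z − x| ≤ 3|I|` with `z ∈ ℝ₊`, then
`P*_μ(g · 1_{ℝ²₊₊ ∖ 3Î})(x) ≤ 19^{λ+1} P*_μ(g)(z)`; in particular, if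
`P*_μ(g)(z) ≤ κ` then `P*_μ(g · 1_{ℝ²₊₊ ∖ 3Î})(x) ≤ 19^{λ+1} κ`. -/
theorem bessel_poisson_maximum_principle (lam : ℝ) (hlam : 0 < lam)
    (μ : Measure (ℝ × ℝ)) (g : ℝ × ℝ → ℝ≥0∞) (hg : Measurable g)
    (a b : ℝ) (ha : 0 ≤ a) (hab : a < b)
    (x z : ℝ) (hx : x ∈ Set.Ioo a b) (hz : 0 < z)
    (hzx₁ : b - a ≤ |z - x|) (hzx₂ : |z - x| ≤ 3 * (b - a)) :
    Padj lam μ (((Set.Ioi (0 : ℝ) ×ˢ Set.Ioi (0 : ℝ)) \ boxI3 a b).indicator g) x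
        ≤ ENNReal.ofReal ((19 : ℝ) ^ (lam + 1)) * Padj lam μ g z ∧
      ∀ κ : ℝ≥0∞, Padj lam μ g z ≤ κ →
        Padj lam μ (((Set.Ioi (0 : ℝ) ×ˢ Set.Ioi (0 : ℝ)) \ boxI3 a b).indicator g) x
          ≤ ENNReal.ofReal ((19 : ℝ) ^ (lam + 1)) * κ :=
  bessel_poisson_maximum_principle_general lam hlam μ g a b ha x z hx hzx₂
end

section
/- Let λ > 0 and let x, y, s, t > 0 satisfy 0 < t ≤ s and |x − y| ≥ s. Then (t/s) · P_s(x,y) ≤ P_t(x,y) ≤ 2^{λ+1} (t/s) · P_s(x,y). -/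
open MeasureTheory Set ENNReal

/-!
Weinstein's integrand at height `t` is `sin θ ^ (2λ - 1) * (q + t²) ^ (-(λ + 1))` with
`q = x² + y² - 2xy cos θ ≥ (x - y)² ≥ s²`. Hence `q + t² ≤ q + s² ≤ 2 (q + t²)`, so the
integrand at height `t` lies between the one at height `s` and `2 ^ (λ + 1)` times it.
Integrating, and comparing the prefactors `2λt/π` and `2λs/π`, gives the claim.
-/

namespace MeasureTheory

variable {α : Type*} [MeasurableSpace α] {μ : Measure α} {f g : α → ℝ} {C : ℝ}

-- No integrability is assumed: under `0 ≤ f ≤ g ≤ C f` the functions are integrable together,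
-- and otherwise both integrals take the junk value `0`.
lemma integral_mono_of_le_const_mul (hf : 0 ≤ᵐ[μ] f) (hfg : f ≤ᵐ[μ] g)
    (hgf : g ≤ᵐ[μ] fun a => C * f a) (hg : AEStronglyMeasurable g μ) :
    ∫ a, f a ∂μ ≤ ∫ a, g a ∂μ := by
  by_cases hg_int : Integrable g μ
  · exact integral_mono_of_nonneg hf hg_int hfg
  have hf_int : ¬ Integrable f μ := fun hf_int =>
    hg_int <| (hf_int.const_mul C).mono_nonneg hg (hf.trans hfg) hgf
  rw [integral_undef hf_int, integral_undef hg_int]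

lemma integral_le_const_mul_of_le (hf : 0 ≤ᵐ[μ] f) (hfg : f ≤ᵐ[μ] g)
    (hgf : g ≤ᵐ[μ] fun a => C * f a) (hf_meas : AEStronglyMeasurable f μ)
    (hg : AEStronglyMeasurable g μ) :
    ∫ a, g a ∂μ ≤ C * ∫ a, f a ∂μ := by
  by_cases hf_int : Integrable f μ
  · have hg_int : Integrable g μ := (hf_int.const_mul C).mono_nonneg hg (hf.trans hfg) hgf
    rw [← integral_const_mul]
    exact integral_mono_ae hg_int (hf_int.const_mul C) hgf
  have hg_int : ¬ Integrable g μ := fun hg_int => hf_int <| hg_int.mono_nonneg hf_meas hf hfg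
  rw [integral_undef hf_int, integral_undef hg_int, mul_zero]

end MeasureTheory

lemma Real.rpow_neg_le_two_rpow_mul_rpow_neg {a b r : ℝ} (hb : 0 < b) (hba : b ≤ 2 * a)
    (hr : 0 ≤ r) : a ^ (-r) ≤ 2 ^ r * b ^ (-r) := by
  calc a ^ (-r) ≤ (b / 2) ^ (-r) :=
        Real.rpow_le_rpow_of_nonpos (by positivity) (by linarith) (by linarith)
    _ = 2 ^ r * b ^ (-r) := by
      rw [Real.div_rpow hb.le zero_le_two, Real.rpow_neg zero_le_two, div_eq_mul_inv, inv_inv,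
        mul_comm]

noncomputable def weinsteinIntegrand (lam t x y θ : ℝ) : ℝ :=
  Real.sin θ ^ (2 * lam - 1) * (x ^ 2 + y ^ 2 + t ^ 2 - 2 * x * y * Real.cos θ) ^ (-(lam + 1))

lemma PK_eq_mul_integral (lam t x y : ℝ) :
    PK lam t x y = 2 * lam * t / Real.pi *
      ∫ θ in Ioo 0 Real.pi, weinsteinIntegrand lam t x y θ := rfl

lemma measurable_weinsteinIntegrand (lam t x y : ℝ) :
    Measurable (weinsteinIntegrand lam t x y) := by
  unfold weinsteinIntegrand
  fun_prop

lemma sq_sub_le_sq_add_sq_sub_two_mul_mul_cos {x y : ℝ} (hxy : 0 ≤ x * y) (θ : ℝ) :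
    (x - y) ^ 2 ≤ x ^ 2 + y ^ 2 - 2 * x * y * Real.cos θ := by
  nlinarith [Real.cos_le_one θ]

lemma weinsteinIntegrand_height_comparison {lam x y s t θ : ℝ} (hlam : -1 ≤ lam)
    (hx : 0 ≤ x) (hy : 0 ≤ y) (ht : 0 < t) (hts : t ≤ s) (hxy : s ≤ |x - y|)
    (hθ : θ ∈ Icc 0 Real.pi) :
    0 ≤ weinsteinIntegrand lam s x y θ ∧
      weinsteinIntegrand lam s x y θ ≤ weinsteinIntegrand lam t x y θ ∧
      weinsteinIntegrand lam t x y θ ≤ 2 ^ (lam + 1) * weinsteinIntegrand lam s x y θ := by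
  set q := x ^ 2 + y ^ 2 - 2 * x * y * Real.cos θ
  have hq : s ^ 2 ≤ q := calc
    s ^ 2 ≤ |x - y| ^ 2 := pow_le_pow_left₀ (ht.le.trans hts) hxy 2
    _ = (x - y) ^ 2 := sq_abs _
    _ ≤ q := sq_sub_le_sq_add_sq_sub_two_mul_mul_cos (mul_nonneg hx hy) θ
  have hts2 : t ^ 2 ≤ s ^ 2 := pow_le_pow_left₀ ht.le hts 2
  have hqt : 0 < q + t ^ 2 := by nlinarith
  have hqs : q + s ^ 2 ≤ 2 * (q + t ^ 2) := by nlinarith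
  have hsin : 0 ≤ Real.sin θ ^ (2 * lam - 1) :=
    Real.rpow_nonneg (Real.sin_nonneg_of_nonneg_of_le_pi hθ.1 hθ.2) _
  have hW (u : ℝ) : weinsteinIntegrand lam u x y θ =
      Real.sin θ ^ (2 * lam - 1) * (q + u ^ 2) ^ (-(lam + 1)) := by
    simp only [weinsteinIntegrand, q]
    ring_nf
  simp only [hW]
  refine ⟨mul_nonneg hsin (Real.rpow_nonneg (by linarith) _), ?_, ?_⟩
  · gcongr ?_ * ?_
    exact Real.rpow_le_rpow_of_nonpos hqt (by linarith) (by linarith)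
  · rw [mul_left_comm]
    gcongr ?_ * ?_
    exact Real.rpow_neg_le_two_rpow_mul_rpow_neg (by linarith) hqs (by linarith)

lemma integral_weinsteinIntegrand_height_comparison {lam x y s t : ℝ} (hlam : -1 ≤ lam)
    (hx : 0 ≤ x) (hy : 0 ≤ y) (ht : 0 < t) (hts : t ≤ s) (hxy : s ≤ |x - y|) :
    ∫ θ in Ioo 0 Real.pi, weinsteinIntegrand lam s x y θ ≤
        ∫ θ in Ioo 0 Real.pi, weinsteinIntegrand lam t x y θ ∧
      ∫ θ in Ioo 0 Real.pi, weinsteinIntegrand lam t x y θ ≤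
        2 ^ (lam + 1) * ∫ θ in Ioo 0 Real.pi, weinsteinIntegrand lam s x y θ := by
  have hcmp := ae_restrict_of_forall_mem (μ := volume) measurableSet_Ioo fun θ hθ =>
    weinsteinIntegrand_height_comparison hlam hx hy ht hts hxy (Ioo_subset_Icc_self hθ)
  have hmeas (u : ℝ) := (measurable_weinsteinIntegrand lam u x y).aestronglyMeasurable
    (μ := volume.restrict (Ioo 0 Real.pi))
  exact ⟨integral_mono_of_le_const_mul (hcmp.mono fun _ h => h.1) (hcmp.mono fun _ h => h.2.1)
      (hcmp.mono fun _ h => h.2.2) (hmeas t),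
    integral_le_const_mul_of_le (hcmp.mono fun _ h => h.1) (hcmp.mono fun _ h => h.2.1)
      (hcmp.mono fun _ h => h.2.2) (hmeas s) (hmeas t)⟩

/-- Comparison of the kernel at two heights: if `0 < t ≤ s ≤ |x − y|`,
then `(t/s) P_s(x, y) ≤ P_t(x, y) ≤ 2^{λ+1} (t/s) P_s(x, y)`. -/
theorem bessel_poisson_kernel_height_comparison (lam : ℝ) (hlam : 0 < lam)
    (x y s t : ℝ) (hx : 0 < x) (hy : 0 < y) (ht : 0 < t) (hts : t ≤ s)
    (hxy : s ≤ |x - y|) :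
    t / s * PK lam s x y ≤ PK lam t x y ∧
      PK lam t x y ≤ (2 : ℝ) ^ (lam + 1) * (t / s * PK lam s x y) := by
  obtain ⟨hlower, hupper⟩ := integral_weinsteinIntegrand_height_comparison
    (neg_one_lt_zero.trans hlam).le hx.le hy.le ht hts hxy
  have hrescale : t / s * PK lam s x y =
      2 * lam * t / Real.pi * ∫ θ in Ioo 0 Real.pi, weinsteinIntegrand lam s x y θ := by
    rw [PK_eq_mul_integral]
    field_simp [(ht.trans_le hts).ne']
  have hc : 0 ≤ 2 * lam * t / Real.pi := by positivity
  rw [hrescale, PK_eq_mul_integral, mul_left_comm (2 ^ (lam + 1))]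
  exact ⟨mul_le_mul_of_nonneg_left hlower hc, mul_le_mul_of_nonneg_left hupper hc⟩
end

section
/- Let λ > 0 and let x, x', y, t > 0 satisfy |x − x'| ≤ t/2 and |x − y| ≥ t. Then (4/9)^{λ+1} P_t(x',y) ≤ P_t(x,y) ≤ 4^{λ+1} P_t(x',y). -/
open MeasureTheory Set ENNReal

/-!
The Weinstein denominator `x² + y² + t² − 2xy cos θ = (x − y cos θ)² + y² sin² θ + t²` changes by
at most a factor `2` when the pole `x` moves by at most `t / 2`, since the resulting error
`2 (x − x')² ≤ t² / 2` is absorbed by the `t²` term. Raising to the power `−(λ + 1)` and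
integrating in `θ` makes `P_t(x, y)` and `P_t(x', y)` comparable with constants `2^{±(λ+1)}`,
which lie between `(4/9)^{λ+1}` and `4^{λ+1}`.
-/

namespace BesselPoisson

/-- Since each of `f`, `g` is dominated by a multiple of the other, they are integrable together,
so the junk value `0` of a non-integrable integral is harmless. -/
theorem integral_le_mul_integral_of_ae_le_mul {α : Type*} [MeasurableSpace α] {μ : Measure α}
    {f g : α → ℝ} {b c : ℝ} (hg : AEStronglyMeasurable g μ) (hf₀ : 0 ≤ᵐ[μ] f)
    (hg₀ : 0 ≤ᵐ[μ] g) (hfg : ∀ᵐ a ∂μ, f a ≤ b * g a) (hgf : ∀ᵐ a ∂μ, g a ≤ c * f a) :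
    ∫ a, f a ∂μ ≤ b * ∫ a, g a ∂μ := by
  by_cases hgi : Integrable g μ
  · rw [← integral_const_mul]
    exact integral_mono_of_nonneg hf₀ (hgi.const_mul b) hfg
  · have hfi : ¬Integrable f μ := fun hfi => hgi <| (hfi.const_mul c).mono' hg <| by
      filter_upwards [hgf, hg₀] with a h h₀
      rwa [Real.norm_eq_abs, abs_of_nonneg h₀]
    rw [integral_undef hfi, integral_undef hgi, mul_zero]

noncomputable def weinsteinDenom (t x y θ : ℝ) : ℝ :=
  x ^ 2 + y ^ 2 + t ^ 2 - 2 * x * y * Real.cos θ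

noncomputable def weinsteinIntegrand (lam t x y θ : ℝ) : ℝ :=
  Real.sin θ ^ (2 * lam - 1) * weinsteinDenom t x y θ ^ (-(lam + 1))

theorem PK_eq_integral_weinsteinIntegrand (lam t x y : ℝ) :
    PK lam t x y = 2 * lam * t / Real.pi *
      ∫ θ in Ioo 0 Real.pi, weinsteinIntegrand lam t x y θ :=
  rfl

theorem weinsteinDenom_nonneg (t x y θ : ℝ) : 0 ≤ weinsteinDenom t x y θ := by
  unfold weinsteinDenom
  nlinarith [sq_nonneg (x - y * Real.cos θ), Real.cos_sq_le_one θ, sq_nonneg y, sq_nonneg t]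

theorem weinsteinDenom_pos {t : ℝ} (ht : t ≠ 0) (x y θ : ℝ) : 0 < weinsteinDenom t x y θ := by
  unfold weinsteinDenom
  nlinarith [sq_nonneg (x - y * Real.cos θ), Real.cos_sq_le_one θ, sq_nonneg y,
    sq_pos_of_ne_zero ht]

theorem weinsteinDenom_le_two_mul {t x x' : ℝ} (hxx' : |x - x'| ≤ t / 2) (y θ : ℝ) :
    weinsteinDenom t x' y θ ≤ 2 * weinsteinDenom t x y θ := by
  have hsq : (x - x') ^ 2 ≤ (t / 2) ^ 2 := sq_le_sq' (abs_le.1 hxx').1 (abs_le.1 hxx').2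
  unfold weinsteinDenom
  nlinarith [sq_nonneg (2 * x - x' - y * Real.cos θ), Real.cos_sq_le_one θ, sq_nonneg y]

theorem weinsteinIntegrand_nonneg (lam t x y : ℝ) {θ : ℝ} (hθ : θ ∈ Icc 0 Real.pi) :
    0 ≤ weinsteinIntegrand lam t x y θ :=
  mul_nonneg (Real.rpow_nonneg (Real.sin_nonneg_of_nonneg_of_le_pi hθ.1 hθ.2) _)
    (Real.rpow_nonneg (weinsteinDenom_nonneg t x y θ) _)

theorem weinsteinIntegrand_le_two_rpow_mul {lam t x x' : ℝ} (hlam : -1 ≤ lam) (ht : t ≠ 0)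
    (hxx' : |x - x'| ≤ t / 2) (y : ℝ) {θ : ℝ} (hθ : θ ∈ Icc 0 Real.pi) :
    weinsteinIntegrand lam t x y θ ≤ 2 ^ (lam + 1) * weinsteinIntegrand lam t x' y θ := by
  have hdenom : weinsteinDenom t x y θ ^ (-(lam + 1)) ≤
      2 ^ (lam + 1) * weinsteinDenom t x' y θ ^ (-(lam + 1)) :=
    calc weinsteinDenom t x y θ ^ (-(lam + 1))
        ≤ (weinsteinDenom t x' y θ / 2) ^ (-(lam + 1)) :=
          Real.rpow_le_rpow_of_nonpos (by linarith [weinsteinDenom_pos ht x' y θ])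
            (by linarith [weinsteinDenom_le_two_mul hxx' y θ]) (by linarith)
      _ = 2 ^ (lam + 1) * weinsteinDenom t x' y θ ^ (-(lam + 1)) := by
          rw [Real.div_rpow (weinsteinDenom_nonneg t x' y θ) zero_le_two,
            Real.rpow_neg zero_le_two, div_inv_eq_mul, mul_comm]
  unfold weinsteinIntegrand
  rw [mul_left_comm]
  exact mul_le_mul_of_nonneg_left hdenom
    (Real.rpow_nonneg (Real.sin_nonneg_of_nonneg_of_le_pi hθ.1 hθ.2) _)

theorem PK_nonneg {lam t : ℝ} (hlam : 0 ≤ lam) (ht : 0 ≤ t) (x y : ℝ) : 0 ≤ PK lam t x y :=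
  mul_nonneg (by positivity) <| setIntegral_nonneg measurableSet_Ioo fun _ hθ =>
    weinsteinIntegrand_nonneg lam t x y (Ioo_subset_Icc_self hθ)

theorem PK_le_two_rpow_mul_PK {lam t x x' : ℝ} (hlam : 0 ≤ lam) (ht : 0 < t)
    (hxx' : |x - x'| ≤ t / 2) (y : ℝ) :
    PK lam t x y ≤ 2 ^ (lam + 1) * PK lam t x' y := by
  have hx'x : |x' - x| ≤ t / 2 := by rwa [abs_sub_comm]
  have hmeas : Measurable (weinsteinIntegrand lam t x' y) := by
    unfold weinsteinIntegrand weinsteinDenom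
    fun_prop
  have hint : (∫ θ in Ioo 0 Real.pi, weinsteinIntegrand lam t x y θ) ≤
      2 ^ (lam + 1) * ∫ θ in Ioo 0 Real.pi, weinsteinIntegrand lam t x' y θ := by
    refine integral_le_mul_integral_of_ae_le_mul (c := 2 ^ (lam + 1))
        hmeas.aestronglyMeasurable ?_ ?_ ?_ ?_ <;>
      refine ae_restrict_of_forall_mem measurableSet_Ioo fun θ hθ => ?_
    · exact weinsteinIntegrand_nonneg lam t x y (Ioo_subset_Icc_self hθ)
    · exact weinsteinIntegrand_nonneg lam t x' y (Ioo_subset_Icc_self hθ)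
    · exact weinsteinIntegrand_le_two_rpow_mul (by linarith) ht.ne' hxx' y (Ioo_subset_Icc_self hθ)
    · exact weinsteinIntegrand_le_two_rpow_mul (by linarith) ht.ne' hx'x y (Ioo_subset_Icc_self hθ)
  rw [PK_eq_integral_weinsteinIntegrand, PK_eq_integral_weinsteinIntegrand, mul_left_comm]
  exact mul_le_mul_of_nonneg_left hint (by positivity)

end BesselPoisson

open BesselPoisson in
theorem bessel_poisson_kernel_pole_comparison_general (lam : ℝ) (hlam : 0 < lam)
    (x x' y t : ℝ) (ht : 0 < t)
    (hxx' : |x - x'| ≤ t / 2) :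
    (4 / 9 : ℝ) ^ (lam + 1) * PK lam t x' y ≤ PK lam t x y ∧
      PK lam t x y ≤ (4 : ℝ) ^ (lam + 1) * PK lam t x' y := by
  have hPK' : 0 ≤ PK lam t x' y := PK_nonneg hlam.le ht.le x' y
  have hx'x : |x' - x| ≤ t / 2 := by rwa [abs_sub_comm]
  constructor
  · calc (4 / 9 : ℝ) ^ (lam + 1) * PK lam t x' y
        ≤ (2 ^ (lam + 1))⁻¹ * PK lam t x' y := by
          rw [← Real.inv_rpow zero_le_two]
          gcongr
          norm_num
      _ ≤ PK lam t x y := by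
          rw [inv_mul_le_iff₀ (by positivity)]
          exact PK_le_two_rpow_mul_PK hlam.le ht hx'x y
  · calc PK lam t x y ≤ 2 ^ (lam + 1) * PK lam t x' y := PK_le_two_rpow_mul_PK hlam.le ht hxx' y
      _ ≤ 4 ^ (lam + 1) * PK lam t x' y := by gcongr; norm_num

/-- Comparison of the kernel at two nearby poles: if `|x − x'| ≤ t/2`
and `|x − y| ≥ t`, then `(4/9)^{λ+1} P_t(x', y) ≤ P_t(x, y) ≤ 4^{λ+1} P_t(x', y)`. -/
theorem bessel_poisson_kernel_pole_comparison (lam : ℝ) (hlam : 0 < lam)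
    (x x' y t : ℝ) (hx : 0 < x) (hx' : 0 < x') (hy : 0 < y) (ht : 0 < t)
    (hxx' : |x - x'| ≤ t / 2) (hxy : t ≤ |x - y|) :
    (4 / 9 : ℝ) ^ (lam + 1) * PK lam t x' y ≤ PK lam t x y ∧
      PK lam t x y ≤ (4 : ℝ) ^ (lam + 1) * PK lam t x' y :=
  bessel_poisson_kernel_pole_comparison_general lam hlam x x' y t ht hxx'
end
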